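/- With A the quantum complete intersection as below, let α_{i,j}, β_{i,j} ∈ k for 0 ≤ i,j ≤ p−1. There exists a derivation f of A with f(x) = Σ_{0≤i,j≤p−1} α_{i,j} x^i y^j and f(y) = Σ_{0≤i,j≤p−1} β_{i,j} x^i y^j if and only if the following three conditions hold: (1) α_{i,j−1}(1 − q^{i−1}) + β_{i−1,j}(1 − q^{j−1}) = 0 for all 1 ≤ i,j ≤ p−1; (2) α_{0,j−1} = 0 for all 1 ≤ j ≤ p−1; (3) β_{i−1,0} = 0 for all 1 ≤ i ≤ p−1. In particular, every derivation of A maps J(A) into J(A). -/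

import Mathlib

/-!
Context: `A` is the quantum complete intersection
`A = k⟨x,y⟩/(x^p, y^p, yx − q·xy)` over a field `k` of odd prime characteristic `p`,
where `q ∈ k^×` has finite multiplicative order `e` with `2 ≤ e` and `e ∣ p − 1`.
`HH¹(A) = Der(A)/IDer(A)` is the first Hochschild cohomology of `A`, a Lie algebra
with bracket induced by `[f,g] = f∘g − g∘f`.
-/

section HochschildPrelim

variable (k : Type*) [CommRing k] (A : Type*) [Ring A] [Algebra k A]

attribute [local instance 100] LieRing.ofAssociativeRing

/-- A derivation of the `k`-algebra `A`: a `k`-linear map satisfying the Leibniz rule. -/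
def IsDeriv (f : Module.End k A) : Prop := ∀ a b : A, f (a * b) = a * f b + f a * b

/-- An inner derivation `[c, -] : a ↦ c*a - a*c`. -/
def IsInner (f : Module.End k A) : Prop := ∃ c : A, ∀ a : A, f a = c * a - a * c

/-- The Lie algebra `Der(A)` of derivations, as a Lie subalgebra of `End_k(A)`
(with the commutator bracket). -/
def Der : LieSubalgebra k (Module.End k A) where
  carrier := {f | IsDeriv k A f}
  add_mem' := by
    intro f g hf hg
    intro a b
    simp only [LinearMap.add_apply, hf a b, hg a b]
    noncomm_ring
  zero_mem' := by intro a b; simp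
  smul_mem' := by
    intro c f hf
    intro a b
    simp only [LinearMap.smul_apply, hf a b, smul_add, mul_smul_comm, smul_mul_assoc]
  lie_mem' := by
    intro f g hf hg
    intro a b
    rw [Ring.lie_def]
    simp only [LinearMap.sub_apply, Module.End.mul_apply]
    rw [hg a b, map_add, hf a (g b), hf (g a) b, hf a b, map_add, hg a (f b), hg (f a) b,
      mul_sub, sub_mul]
    abel

/-- The inner derivations form a Lie ideal `IDer(A)` of `Der(A)`. -/
def IDer : LieIdeal k (Der k A) where
  carrier := {f | IsInner k A f.1}
  add_mem' := by
    rintro f g ⟨c, hc⟩ ⟨d, hd⟩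
    refine ⟨c + d, fun a => ?_⟩
    show f.1 a + g.1 a = _
    rw [hc, hd]
    noncomm_ring
  zero_mem' := ⟨0, fun a => by simp⟩
  smul_mem' := by
    rintro t f ⟨c, hc⟩
    refine ⟨t • c, fun a => ?_⟩
    show t • f.1 a = _
    rw [hc, smul_sub, smul_mul_assoc, mul_smul_comm]
  lie_mem := by
    rintro x m ⟨c, hc⟩
    refine ⟨x.1 c, fun a => ?_⟩
    have hx : IsDeriv k A x.1 := x.2
    have h : (↑(⁅x, m⁆ : Der k A) : Module.End k A) a = x.1 (m.1 a) - m.1 (x.1 a) := rfl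
    rw [h, hc, hc, map_sub, hx c a, hx a c]
    abel

/-- The first Hochschild cohomology `HH¹(A) = Der(A)/IDer(A)`, as a quotient Lie algebra. -/
abbrev HH1 := Der k A ⧸ IDer k A

end HochschildPrelim

/-!
A derivation `f` of `A` with `f x = u`, `f y = v` is the same thing as a `k`-algebra map
`A → A ⊕ Aε` into the square-zero extension that lifts the identity and sends `x ↦ x + uε`,
`y ↦ y + vε`. As `A` has basis `x^i y^j`, such a map exists iff `X = x + uε` and `Y = y + vε`
satisfy the defining relations `YX = qXY`, `X^p = Y^p = 0`. Comparing coefficients, `YX = qXY`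
is exactly conditions (1)–(3); given (2) and (3), `X^p = Y^p = 0` hold because `q^(p-1) = 1`
and `p = 0` in `k`.

For the radical: the augmentation `χ : A → k`, `x, y ↦ 0`, has a nil kernel, so
`ker χ ⊆ J(A)`. For a derivation `f`, `χ ∘ f` is a point derivation at `χ` which vanishes on
`x` and `y` by (2) and (3), so `f` maps all of `A` into `ker χ`.
-/

open Finset

section QCommute

variable {k R : Type*} [CommSemiring k] [Semiring R] [Algebra k R] {q : k} {x y : R}

theorem mul_pow_eq_smul_of_mul_eq_smul (h : y * x = q • (x * y)) (n : ℕ) :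
    y * x ^ n = q ^ n • (x ^ n * y) := by
  induction n with
  | zero => simp
  | succ n ih =>
    rw [pow_succ, ← mul_assoc, ih, smul_mul_assoc, mul_assoc, h, mul_smul_comm, smul_smul,
      ← pow_succ, ← mul_assoc, ← pow_succ]

theorem pow_mul_pow_eq_smul_of_mul_eq_smul (h : y * x = q • (x * y)) (m n : ℕ) :
    y ^ m * x ^ n = q ^ (m * n) • (x ^ n * y ^ m) := by
  induction m with
  | zero => simp
  | succ m ih =>
    rw [pow_succ, mul_assoc, mul_pow_eq_smul_of_mul_eq_smul h, mul_smul_comm, ← mul_assoc, ih,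
      smul_mul_assoc, smul_smul, ← pow_add, mul_assoc, ← pow_succ, add_mul, one_mul, add_comm]

theorem pow_mul_eq_smul_of_mul_eq_smul (h : y * x = q • (x * y)) (m : ℕ) :
    y ^ m * x = q ^ m • (x * y ^ m) := by
  simpa using pow_mul_pow_eq_smul_of_mul_eq_smul h m 1

theorem monomial_mul_monomial (h : y * x = q • (x * y)) (a b c d : ℕ) :
    x ^ a * y ^ b * (x ^ c * y ^ d) = q ^ (b * c) • (x ^ (a + c) * y ^ (b + d)) := by
  rw [mul_assoc, ← mul_assoc (y ^ b), pow_mul_pow_eq_smul_of_mul_eq_smul h, smul_mul_assoc,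
    mul_smul_comm, pow_add, pow_add, mul_assoc, mul_assoc]

end QCommute

theorem Finset.sum_range_add_one_eq_of_eq_zero {M : Type*} [AddCommMonoid M] {n : ℕ}
    (f : ℕ → M) (h0 : f 0 = 0) (hn : f n = 0) :
    ∑ i ∈ range n, f (i + 1) = ∑ i ∈ range n, f i := by
  have h := (sum_range_succ' f n).symm.trans (sum_range_succ f n)
  rwa [h0, hn, add_zero, add_zero] at h

theorem TrivSqZeroExt.snd_pow_eq_sum_range {R : Type*} [Semiring R] (X : TrivSqZeroExt R R)
    (n : ℕ) : (X ^ n).snd = ∑ i ∈ range n, X.fst ^ i * X.snd * X.fst ^ (n - 1 - i) := by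
  induction n with
  | zero => simp
  | succ n ih =>
    rw [pow_succ, snd_mul, fst_pow, ih, sum_range_succ, smul_eq_mul, MulOpposite.smul_eq_mul_unop,
      MulOpposite.unop_op, sum_mul, add_comm]
    congr 1
    · refine sum_congr rfl fun i hi => ?_
      rw [mul_assoc, ← pow_succ]
      congr 2
      have := mem_range.mp hi
      omega
    · simp

section Derivation

variable {k A : Type*} [CommRing k] [Ring A] [Algebra k A] {f : Module.End k A}

theorem IsDeriv.map_one (hf : IsDeriv k A f) : f 1 = 0 := by
  simpa using hf 1 1

def IsDeriv.toAlgHom (hf : IsDeriv k A f) : A →ₐ[k] TrivSqZeroExt A A where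
  toFun a := (a, f a)
  map_one' := TrivSqZeroExt.ext rfl hf.map_one
  map_mul' a c := TrivSqZeroExt.ext rfl <| show f (a * c) = a • f c + MulOpposite.op c • f a by
    rw [hf a c, smul_eq_mul, op_smul_eq_mul]
  map_zero' := TrivSqZeroExt.ext rfl (map_zero f)
  map_add' a c := TrivSqZeroExt.ext rfl (map_add f a c)
  commutes' r := TrivSqZeroExt.ext rfl (by simp [Algebra.algebraMap_eq_smul_one, hf.map_one])

def AlgHom.sndLinearMap (g : A →ₐ[k] TrivSqZeroExt A A) : Module.End k A where
  toFun a := (g a).snd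
  map_add' a c := by simp
  map_smul' r a := by simp

theorem AlgHom.isDeriv_sndLinearMap (g : A →ₐ[k] TrivSqZeroExt A A) (hg : ∀ a, (g a).fst = a) :
    IsDeriv k A g.sndLinearMap := fun a c => by
  simp [sndLinearMap, hg, add_comm]

end Derivation

namespace QuantumCompleteIntersection

variable {k A : Type*} [CommRing k] [Ring A] [Algebra k A] {p : ℕ} {q : k} {x y : A}
  (b : Module.Basis (Fin p × Fin p) k A)

section Lift

variable {B : Type*} [Ring B] [Algebra k B]

theorem algHom_ext (hb : ∀ ij : Fin p × Fin p, b ij = x ^ (ij.1 : ℕ) * y ^ (ij.2 : ℕ))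
    {g₁ g₂ : A →ₐ[k] B} (hgx : g₁ x = g₂ x) (hgy : g₁ y = g₂ y) : g₁ = g₂ :=
  AlgHom.toLinearMap_injective <| b.ext fun ij => by simp [hb, hgx, hgy]

theorem exists_algHom_iff (hb : ∀ ij : Fin p × Fin p, b ij = x ^ (ij.1 : ℕ) * y ^ (ij.2 : ℕ))
    (hyx : y * x = q • (x * y)) (hx : x ^ p = 0) (hy : y ^ p = 0) (X Y : B) :
    (∃ g : A →ₐ[k] B, g x = X ∧ g y = Y) ↔ Y * X = q • (X * Y) ∧ X ^ p = 0 ∧ Y ^ p = 0 := by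
  constructor
  · rintro ⟨g, rfl, rfl⟩
    refine ⟨?_, ?_, ?_⟩
    · rw [← map_mul, ← map_mul, hyx, map_smul]
    · rw [← map_pow, hx, map_zero]
    · rw [← map_pow, hy, map_zero]
  rintro ⟨hYX, hX, hY⟩
  set g := b.constr k fun ij => X ^ (ij.1 : ℕ) * Y ^ (ij.2 : ℕ)
  have hg : ∀ i j : ℕ, g (x ^ i * y ^ j) = X ^ i * Y ^ j := by
    intro i j
    by_cases hij : i < p ∧ j < p
    · have := b.constr_basis k (fun ij => X ^ (ij.1 : ℕ) * Y ^ (ij.2 : ℕ)) (⟨i, hij.1⟩, ⟨j, hij.2⟩)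
      rwa [hb] at this
    · rcases not_and_or.mp hij with hi | hj
      · rw [← Nat.sub_add_cancel (not_lt.mp hi), pow_add, pow_add, hx, hX]
        simp
      · rw [← Nat.sub_add_cancel (not_lt.mp hj), pow_add, pow_add, hy, hY]
        simp
  have hmul : (LinearMap.mul k A).compr₂ g = (LinearMap.mul k B).compl₁₂ g g :=
    b.ext fun ij => b.ext fun kl => by
      simp only [LinearMap.compr₂_apply, LinearMap.compl₁₂_apply, LinearMap.mul_apply', hb,
        monomial_mul_monomial hyx, map_smul, hg, monomial_mul_monomial hYX]
  refine ⟨AlgHom.ofLinearMap g (by simpa using hg 0 0) fun a c => congr($hmul a c),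
    by simpa using hg 1 0, by simpa using hg 0 1⟩

end Lift

theorem exists_isDeriv_iff (hb : ∀ ij : Fin p × Fin p, b ij = x ^ (ij.1 : ℕ) * y ^ (ij.2 : ℕ))
    (hyx : y * x = q • (x * y)) (hx : x ^ p = 0) (hy : y ^ p = 0) (u v : A) :
    (∃ f : Module.End k A, IsDeriv k A f ∧ f x = u ∧ f y = v) ↔
      y * u + v * x = q • (x * v + u * y) ∧
      ∑ a ∈ range p, x ^ a * u * x ^ (p - 1 - a) = 0 ∧
      ∑ a ∈ range p, y ^ a * v * y ^ (p - 1 - a) = 0 := by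
  obtain ⟨X, hX₁, hX₂⟩ : ∃ X : TrivSqZeroExt A A, X.fst = x ∧ X.snd = u := ⟨(x, u), rfl, rfl⟩
  obtain ⟨Y, hY₁, hY₂⟩ : ∃ Y : TrivSqZeroExt A A, Y.fst = y ∧ Y.snd = v := ⟨(y, v), rfl, rfl⟩
  have hrel : Y * X = q • (X * Y) ↔ y * u + v * x = q • (x * v + u * y) := by
    simp [TrivSqZeroExt.ext_iff, hX₁, hX₂, hY₁, hY₂, hyx]
  have hXp : X ^ p = 0 ↔ ∑ a ∈ range p, x ^ a * u * x ^ (p - 1 - a) = 0 := by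
    simp [TrivSqZeroExt.ext_iff, TrivSqZeroExt.snd_pow_eq_sum_range, hX₁, hX₂, hx]
  have hYp : Y ^ p = 0 ↔ ∑ a ∈ range p, y ^ a * v * y ^ (p - 1 - a) = 0 := by
    simp [TrivSqZeroExt.ext_iff, TrivSqZeroExt.snd_pow_eq_sum_range, hY₁, hY₂, hy]
  rw [← hrel, ← hXp, ← hYp, ← exists_algHom_iff b hb hyx hx hy]
  constructor
  · rintro ⟨f, hf, rfl, rfl⟩
    exact ⟨hf.toAlgHom, TrivSqZeroExt.ext hX₁.symm hX₂.symm, TrivSqZeroExt.ext hY₁.symm hY₂.symm⟩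
  · rintro ⟨g, hgx, hgy⟩
    have hfst : (TrivSqZeroExt.fstHom k A A).comp g = AlgHom.id k A :=
      algHom_ext b hb (by simp [hgx, hX₁]) (by simp [hgy, hY₁])
    refine ⟨g.sndLinearMap, g.isDeriv_sndLinearMap fun a => congr($hfst a), ?_, ?_⟩
    · simp [AlgHom.sndLinearMap, hgx, hX₂]
    · simp [AlgHom.sndLinearMap, hgy, hY₂]

theorem sum_smul_monomial_eq_sum_basis
    (hb : ∀ ij : Fin p × Fin p, b ij = x ^ (ij.1 : ℕ) * y ^ (ij.2 : ℕ)) (c : ℕ → ℕ → k) :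
    ∑ i ∈ range p, ∑ j ∈ range p, c i j • (x ^ i * y ^ j) = ∑ ij, c ij.1 ij.2 • b ij := by
  rw [Fintype.sum_prod_type, ← Fin.sum_univ_eq_sum_range]
  simp only [hb, ← Fin.sum_univ_eq_sum_range (fun j => c _ j • (_ * y ^ j))]

theorem exists_eq_sum_smul_monomial
    (hb : ∀ ij : Fin p × Fin p, b ij = x ^ (ij.1 : ℕ) * y ^ (ij.2 : ℕ)) (a : A) :
    ∃ c : ℕ → ℕ → k, a = ∑ i ∈ range p, ∑ j ∈ range p, c i j • (x ^ i * y ^ j) := by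
  refine ⟨fun i j => if h : i < p ∧ j < p then b.repr a (⟨i, h.1⟩, ⟨j, h.2⟩) else 0, ?_⟩
  rw [sum_smul_monomial_eq_sum_basis b hb]
  simp

theorem sum_smul_monomial_eq_zero_iff
    (hb : ∀ ij : Fin p × Fin p, b ij = x ^ (ij.1 : ℕ) * y ^ (ij.2 : ℕ)) (c : ℕ → ℕ → k) :
    ∑ i ∈ range p, ∑ j ∈ range p, c i j • (x ^ i * y ^ j) = 0 ↔
      ∀ i < p, ∀ j < p, c i j = 0 := by
  refine ⟨fun h i hi j hj => ?_, fun h => ?_⟩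
  · rw [sum_smul_monomial_eq_sum_basis b hb] at h
    exact Fintype.linearIndependent_iff.mp b.linearIndependent _ h (⟨i, hi⟩, ⟨j, hj⟩)
  · exact sum_eq_zero fun i hi => sum_eq_zero fun j hj => by
      rw [h i (mem_range.mp hi) j (mem_range.mp hj), zero_smul]

theorem y_mul_sub_smul_mul_y_eq_sum (hyx : y * x = q • (x * y)) (hy : y ^ p = 0) (α : ℕ → ℕ → k) :
    y * (∑ i ∈ range p, ∑ j ∈ range p, α i j • (x ^ i * y ^ j)) -
        q • ((∑ i ∈ range p, ∑ j ∈ range p, α i j • (x ^ i * y ^ j)) * y) =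
      ∑ i ∈ range p, ∑ j ∈ range p,
        (if j = 0 then 0 else α i (j - 1) * (q ^ i - q)) • (x ^ i * y ^ j) := by
  have hterm : ∀ i j : ℕ, y * (α i j • (x ^ i * y ^ j)) - q • (α i j • (x ^ i * y ^ j) * y) =
      (α i j * (q ^ i - q)) • (x ^ i * y ^ (j + 1)) := by
    intro i j
    rw [mul_smul_comm, ← mul_assoc, mul_pow_eq_smul_of_mul_eq_smul hyx, smul_mul_assoc,
      mul_assoc, ← pow_succ', smul_mul_assoc, mul_assoc, ← pow_succ, smul_smul, smul_smul,
      ← sub_smul, mul_sub, mul_comm q]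
  simp only [mul_sum, sum_mul, smul_sum, ← sum_sub_distrib, hterm]
  refine sum_congr rfl fun i _ => (sum_congr rfl fun j _ => ?_).trans
    (sum_range_add_one_eq_of_eq_zero _ (by simp) (by simp [hy]))
  simp

theorem mul_x_sub_smul_x_mul_eq_sum (hyx : y * x = q • (x * y)) (hx : x ^ p = 0) (β : ℕ → ℕ → k) :
    (∑ i ∈ range p, ∑ j ∈ range p, β i j • (x ^ i * y ^ j)) * x -
        q • (x * ∑ i ∈ range p, ∑ j ∈ range p, β i j • (x ^ i * y ^ j)) =
      ∑ i ∈ range p, ∑ j ∈ range p,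
        (if i = 0 then 0 else β (i - 1) j * (q ^ j - q)) • (x ^ i * y ^ j) := by
  have hterm : ∀ i j : ℕ, β i j • (x ^ i * y ^ j) * x - q • (x * (β i j • (x ^ i * y ^ j))) =
      (β i j * (q ^ j - q)) • (x ^ (i + 1) * y ^ j) := by
    intro i j
    rw [smul_mul_assoc, mul_smul_comm, mul_assoc, pow_mul_eq_smul_of_mul_eq_smul hyx,
      mul_smul_comm, ← mul_assoc, ← pow_succ, ← mul_assoc, ← pow_succ', smul_smul, smul_smul,
      ← sub_smul, mul_sub, mul_comm q]
  simp only [mul_sum, sum_mul, smul_sum, ← sum_sub_distrib, hterm]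
  refine (sum_congr rfl fun i _ => ?_).trans
    (sum_range_add_one_eq_of_eq_zero _ (by simp) (by simp [hx]))
  simp

theorem forall_coeff_eq_zero_iff [IsDomain k] (hq₀ : q ≠ 0) (hq₁ : q ≠ 1) (α β : ℕ → ℕ → k) :
    (∀ i < p, ∀ j < p, (if j = 0 then 0 else α i (j - 1) * (q ^ i - q)) +
        (if i = 0 then 0 else β (i - 1) j * (q ^ j - q)) = 0) ↔
      ((∀ i j : ℕ, 1 ≤ i → i ≤ p - 1 → 1 ≤ j → j ≤ p - 1 →
        α i (j - 1) * (1 - q ^ (i - 1)) + β (i - 1) j * (1 - q ^ (j - 1)) = 0) ∧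
      (∀ j : ℕ, 1 ≤ j → j ≤ p - 1 → α 0 (j - 1) = 0) ∧
      (∀ i : ℕ, 1 ≤ i → i ≤ p - 1 → β (i - 1) 0 = 0)) := by
  have h1q : 1 - q ≠ 0 := sub_ne_zero.mpr hq₁.symm
  constructor
  · intro h
    refine ⟨fun i j hi hi' hj hj' => ?_, fun j hj hj' => ?_, fun i hi hi' => ?_⟩
    · obtain ⟨i, rfl⟩ := Nat.exists_eq_add_of_le' hi
      obtain ⟨j, rfl⟩ := Nat.exists_eq_add_of_le' hj
      have := h (i + 1) (by omega) (j + 1) (by omega)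
      simp only [Nat.add_one_ne_zero, if_false, Nat.add_sub_cancel] at this ⊢
      refine mul_left_cancel₀ hq₀ ?_
      linear_combination -this
    · have := h 0 (by omega) j (by omega)
      simp only [show j ≠ 0 by omega, if_false, if_true, pow_zero, add_zero] at this
      exact (mul_eq_zero.mp this).resolve_right h1q
    · have := h i (by omega) 0 (by omega)
      simp only [show i ≠ 0 by omega, if_false, if_true, pow_zero, zero_add] at this
      exact (mul_eq_zero.mp this).resolve_right h1q
  · rintro ⟨h₁, h₂, h₃⟩ i hi j hj
    rcases i with _ | i <;> rcases j with _ | j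
    · simp
    · simp [show α 0 j = 0 from h₂ (j + 1) (by omega) (by omega)]
    · simp [show β i 0 = 0 from h₃ (i + 1) (by omega) (by omega)]
    · have := h₁ (i + 1) (j + 1) (by omega) (by omega) (by omega) (by omega)
      simp only [Nat.add_one_ne_zero, if_false, Nat.add_sub_cancel] at this ⊢
      linear_combination -q * this

theorem leibniz_relation_iff [IsDomain k]
    (hb : ∀ ij : Fin p × Fin p, b ij = x ^ (ij.1 : ℕ) * y ^ (ij.2 : ℕ))
    (hyx : y * x = q • (x * y)) (hx : x ^ p = 0) (hy : y ^ p = 0) (hq₀ : q ≠ 0) (hq₁ : q ≠ 1)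
    (α β : ℕ → ℕ → k) :
    (y * ∑ i ∈ range p, ∑ j ∈ range p, α i j • (x ^ i * y ^ j)) +
        (∑ i ∈ range p, ∑ j ∈ range p, β i j • (x ^ i * y ^ j)) * x =
      q • (x * (∑ i ∈ range p, ∑ j ∈ range p, β i j • (x ^ i * y ^ j)) +
        (∑ i ∈ range p, ∑ j ∈ range p, α i j • (x ^ i * y ^ j)) * y) ↔
      ((∀ i j : ℕ, 1 ≤ i → i ≤ p - 1 → 1 ≤ j → j ≤ p - 1 →
        α i (j - 1) * (1 - q ^ (i - 1)) + β (i - 1) j * (1 - q ^ (j - 1)) = 0) ∧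
      (∀ j : ℕ, 1 ≤ j → j ≤ p - 1 → α 0 (j - 1) = 0) ∧
      (∀ i : ℕ, 1 ≤ i → i ≤ p - 1 → β (i - 1) 0 = 0)) := by
  have hsplit : ∀ u v : A, y * u + v * x - q • (x * v + u * y) =
      (y * u - q • (u * y)) + (v * x - q • (x * v)) := fun u v => by
    rw [smul_add]; abel
  rw [← sub_eq_zero, hsplit, y_mul_sub_smul_mul_y_eq_sum hyx hy, mul_x_sub_smul_x_mul_eq_sum hyx hx]
  simp only [← sum_add_distrib, ← add_smul]
  exact (sum_smul_monomial_eq_zero_iff b hb _).trans (forall_coeff_eq_zero_iff hq₀ hq₁ α β)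

theorem sum_x_pow_mul_monomial_mul_x_pow (hyx : y * x = q • (x * y)) (n i j : ℕ) :
    ∑ a ∈ range n, x ^ a * (x ^ i * y ^ j) * x ^ (n - 1 - a) =
      (∑ a ∈ range n, (q ^ j) ^ (n - 1 - a)) • (x ^ (n - 1 + i) * y ^ j) := by
  rw [sum_smul]
  refine sum_congr rfl fun a ha => ?_
  have h := monomial_mul_monomial hyx (a + i) j (n - 1 - a) 0
  rw [pow_zero, mul_one, add_zero] at h
  rw [← mul_assoc, ← pow_add, h, ← pow_mul, mul_comm j]
  congr 3
  have := mem_range.mp ha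
  omega

theorem sum_y_pow_mul_monomial_mul_y_pow (hyx : y * x = q • (x * y)) (n i j : ℕ) :
    ∑ a ∈ range n, y ^ a * (x ^ i * y ^ j) * y ^ (n - 1 - a) =
      (∑ a ∈ range n, (q ^ i) ^ a) • (x ^ i * y ^ (j + n - 1)) := by
  rw [sum_smul]
  refine sum_congr rfl fun a ha => ?_
  have h := monomial_mul_monomial hyx 0 a i j
  rw [pow_zero, one_mul, zero_add] at h
  rw [h, smul_mul_assoc, mul_assoc, ← pow_add, ← pow_mul, mul_comm a]
  congr 3
  have := mem_range.mp ha
  omega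

theorem sum_x_pow_mul_mul_x_pow_eq_zero (hyx : y * x = q • (x * y)) (hx : x ^ p = 0)
    (hqp : q ^ (p - 1) = 1) (hp : (p : k) = 0) {α : ℕ → ℕ → k}
    (hα : ∀ j : ℕ, 1 ≤ j → j ≤ p - 1 → α 0 (j - 1) = 0) :
    ∑ a ∈ range p, x ^ a * (∑ i ∈ range p, ∑ j ∈ range p, α i j • (x ^ i * y ^ j)) *
      x ^ (p - 1 - a) = 0 := by
  simp only [mul_sum, sum_mul, mul_smul_comm, smul_mul_assoc]
  rw [sum_comm]
  refine sum_eq_zero fun i hi => ?_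
  rw [sum_comm]
  refine sum_eq_zero fun j hj => ?_
  rw [← smul_sum, sum_x_pow_mul_monomial_mul_x_pow hyx]
  -- only the term `α 0 (p - 1) • y ^ (p - 1)` survives, as `p` equal summands
  rcases Nat.eq_zero_or_pos i with rfl | hi₀
  · by_cases hj' : j = p - 1
    · simp [hj', hqp, hp]
    · rw [show α 0 j = 0 from hα (j + 1) (by omega) (by have := mem_range.mp hj; omega),
        zero_smul]
  · rw [← Nat.sub_add_cancel (show p ≤ p - 1 + i by omega), pow_add, hx]
    simp

theorem sum_y_pow_mul_mul_y_pow_eq_zero (hyx : y * x = q • (x * y)) (hy : y ^ p = 0)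
    (hqp : q ^ (p - 1) = 1) (hp : (p : k) = 0) {β : ℕ → ℕ → k}
    (hβ : ∀ i : ℕ, 1 ≤ i → i ≤ p - 1 → β (i - 1) 0 = 0) :
    ∑ a ∈ range p, y ^ a * (∑ i ∈ range p, ∑ j ∈ range p, β i j • (x ^ i * y ^ j)) *
      y ^ (p - 1 - a) = 0 := by
  simp only [mul_sum, sum_mul, mul_smul_comm, smul_mul_assoc]
  rw [sum_comm]
  refine sum_eq_zero fun i hi => ?_
  rw [sum_comm]
  refine sum_eq_zero fun j hj => ?_
  rw [← smul_sum, sum_y_pow_mul_monomial_mul_y_pow hyx]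
  rcases Nat.eq_zero_or_pos j with rfl | hj₀
  · by_cases hi' : i = p - 1
    · simp [hi', hqp, hp]
    · rw [show β i 0 = 0 from hβ (i + 1) (by omega) (by have := mem_range.mp hi; omega),
        zero_smul]
  · rw [← Nat.sub_add_cancel (show p ≤ j + p - 1 by omega), pow_add, hy]
    simp

variable (k) in
def monomialFiltration (x y : A) (r : ℕ) : Submodule k A :=
  Submodule.span k {a | ∃ u v : ℕ, r ≤ u + v ∧ x ^ u * y ^ v = a}

theorem monomialFiltration_mul_le (hyx : y * x = q • (x * y)) (r s : ℕ) :
    monomialFiltration k x y r * monomialFiltration k x y s ≤ monomialFiltration k x y (r + s) := by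
  rw [monomialFiltration, monomialFiltration, Submodule.span_mul_span, Submodule.span_le]
  rintro _ ⟨_, ⟨u, v, huv, rfl⟩, _, ⟨u', v', huv', rfl⟩, rfl⟩
  simp only [SetLike.mem_coe, monomial_mul_monomial hyx]
  exact Submodule.smul_mem _ _ (Submodule.subset_span ⟨u + u', v + v', by omega, rfl⟩)

theorem pow_mem_monomialFiltration (hyx : y * x = q • (x * y)) {a : A}
    (ha : a ∈ monomialFiltration k x y 1) (n : ℕ) : a ^ n ∈ monomialFiltration k x y n := by
  induction n with
  | zero => exact Submodule.subset_span ⟨0, 0, le_rfl, by simp⟩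
  | succ n ih =>
    rw [pow_succ]
    exact monomialFiltration_mul_le hyx n 1 (Submodule.mul_mem_mul ih ha)

theorem monomialFiltration_eq_bot (hx : x ^ p = 0) (hy : y ^ p = 0) :
    monomialFiltration k x y (2 * p - 1) = ⊥ := by
  rw [monomialFiltration, Submodule.span_eq_bot]
  rintro _ ⟨u, v, huv, rfl⟩
  rcases le_or_gt p u with hu | hv
  · rw [← Nat.sub_add_cancel hu, pow_add, hx, mul_zero, zero_mul]
  · rw [← Nat.sub_add_cancel (show p ≤ v by omega), pow_add, hy, mul_zero, mul_zero]

theorem exists_augmentation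
    (hb : ∀ ij : Fin p × Fin p, b ij = x ^ (ij.1 : ℕ) * y ^ (ij.2 : ℕ))
    (hyx : y * x = q • (x * y)) (hx : x ^ p = 0) (hy : y ^ p = 0) (hp : p ≠ 0) :
    ∃ χ : A →ₐ[k] k, χ x = 0 ∧ χ y = 0 :=
  (exists_algHom_iff b hb hyx hx hy 0 0).mpr ⟨by simp, zero_pow hp, zero_pow hp⟩

theorem augmentation_sum_smul_monomial {χ : A →ₐ[k] k} (hχx : χ x = 0) (hχy : χ y = 0)
    (hp : 0 < p) (c : ℕ → ℕ → k) :
    χ (∑ i ∈ range p, ∑ j ∈ range p, c i j • (x ^ i * y ^ j)) = c 0 0 := by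
  simp [hχx, hχy, zero_pow_eq, hp]

theorem sub_algebraMap_mem_monomialFiltration
    (hb : ∀ ij : Fin p × Fin p, b ij = x ^ (ij.1 : ℕ) * y ^ (ij.2 : ℕ))
    {χ : A →ₐ[k] k} (hχx : χ x = 0) (hχy : χ y = 0) (a : A) :
    a - algebraMap k A (χ a) ∈ monomialFiltration k x y 1 := by
  induction b.mem_span a using Submodule.span_induction with
  | mem _ hm =>
    obtain ⟨⟨i, j⟩, rfl⟩ := hm
    rw [hb]
    by_cases hij : (i : ℕ) = 0 ∧ (j : ℕ) = 0
    · simp [hij]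
    · have hχ : χ (x ^ (i : ℕ) * y ^ (j : ℕ)) = 0 := by
        rw [map_mul, map_pow, map_pow, hχx, hχy]
        rcases not_and_or.mp hij with h | h <;> simp [h]
      rw [hχ, map_zero, sub_zero]
      exact Submodule.subset_span ⟨i, j, by omega, rfl⟩
  | zero => simp
  | add a c _ _ ha hc =>
    convert add_mem ha hc using 1
    rw [map_add, map_add]
    abel
  | smul r a _ ha =>
    convert Submodule.smul_mem _ r ha using 1
    rw [map_smul, smul_sub, smul_eq_mul, map_mul, ← Algebra.smul_def]

theorem isNilpotent_of_augmentation_eq_zero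
    (hb : ∀ ij : Fin p × Fin p, b ij = x ^ (ij.1 : ℕ) * y ^ (ij.2 : ℕ))
    (hyx : y * x = q • (x * y)) (hx : x ^ p = 0) (hy : y ^ p = 0)
    {χ : A →ₐ[k] k} (hχx : χ x = 0) (hχy : χ y = 0) {a : A} (ha : χ a = 0) : IsNilpotent a := by
  have ha₁ : a ∈ monomialFiltration k x y 1 := by
    simpa [ha] using sub_algebraMap_mem_monomialFiltration b hb hχx hχy a
  have := pow_mem_monomialFiltration hyx ha₁ (2 * p - 1)
  rw [monomialFiltration_eq_bot hx hy, Submodule.mem_bot] at this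
  exact ⟨_, this⟩

theorem ker_le_jacobson_bot
    (hb : ∀ ij : Fin p × Fin p, b ij = x ^ (ij.1 : ℕ) * y ^ (ij.2 : ℕ))
    (hyx : y * x = q • (x * y)) (hx : x ^ p = 0) (hy : y ^ p = 0)
    {χ : A →ₐ[k] k} (hχx : χ x = 0) (hχy : χ y = 0) :
    RingHom.ker χ ≤ Ideal.jacobson ⊥ := fun a ha => by
  refine Ideal.mem_jacobson_iff.mpr fun c => ?_
  have hca : χ (c * a) = 0 := by rw [map_mul, RingHom.mem_ker.mp ha, mul_zero]
  obtain ⟨w, hw⟩ := (isNilpotent_of_augmentation_eq_zero b hb hyx hx hy hχx hχy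
    hca).isUnit_add_one.exists_left_inv
  refine ⟨w, ?_⟩
  rw [Ideal.mem_bot, ← hw]
  noncomm_ring

theorem augmentation_apply_eq_zero_of_isDeriv
    (hb : ∀ ij : Fin p × Fin p, b ij = x ^ (ij.1 : ℕ) * y ^ (ij.2 : ℕ))
    {χ : A →ₐ[k] k} (hχx : χ x = 0) (hχy : χ y = 0) {f : Module.End k A} (hf : IsDeriv k A f)
    (hfx : χ (f x) = 0) (hfy : χ (f y) = 0) (a : A) : χ (f a) = 0 := by
  have hmul : ∀ {z : A}, χ z = 0 → χ (f z) = 0 → ∀ m, χ (f (z * m)) = 0 := by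
    intro z hz hfz m
    rw [hf, map_add, map_mul, map_mul, hz, hfz, zero_mul, zero_mul, add_zero]
  have hbasis : ∀ ij, χ (f (b ij)) = 0 := by
    rintro ⟨⟨_ | i, _⟩, ⟨_ | j, _⟩⟩ <;> rw [hb] <;> simp only [pow_zero, one_mul]
    · rw [hf.map_one, map_zero]
    · rw [pow_succ']
      exact hmul hχy hfy _
    all_goals
      rw [pow_succ', mul_assoc]
      exact hmul hχx hfx _
  have := b.ext (f₁ := χ.toLinearMap ∘ₗ f) (f₂ := 0) hbasis
  exact congr($this a)

theorem exists_isDeriv_iff_coeff_conditions [IsDomain k]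
    (hb : ∀ ij : Fin p × Fin p, b ij = x ^ (ij.1 : ℕ) * y ^ (ij.2 : ℕ))
    (hyx : y * x = q • (x * y)) (hx : x ^ p = 0) (hy : y ^ p = 0) (hq₀ : q ≠ 0) (hq₁ : q ≠ 1)
    (hqp : q ^ (p - 1) = 1) (hp : (p : k) = 0) (α β : ℕ → ℕ → k) :
    (∃ f : Module.End k A, IsDeriv k A f ∧
      f x = ∑ i ∈ range p, ∑ j ∈ range p, α i j • (x ^ i * y ^ j) ∧
      f y = ∑ i ∈ range p, ∑ j ∈ range p, β i j • (x ^ i * y ^ j)) ↔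
      ((∀ i j : ℕ, 1 ≤ i → i ≤ p - 1 → 1 ≤ j → j ≤ p - 1 →
        α i (j - 1) * (1 - q ^ (i - 1)) + β (i - 1) j * (1 - q ^ (j - 1)) = 0) ∧
      (∀ j : ℕ, 1 ≤ j → j ≤ p - 1 → α 0 (j - 1) = 0) ∧
      (∀ i : ℕ, 1 ≤ i → i ≤ p - 1 → β (i - 1) 0 = 0)) := by
  rw [exists_isDeriv_iff b hb hyx hx hy, leibniz_relation_iff b hb hyx hx hy hq₀ hq₁ α β]
  exact ⟨And.left, fun h => ⟨h, sum_x_pow_mul_mul_x_pow_eq_zero hyx hx hqp hp h.2.1,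
    sum_y_pow_mul_mul_y_pow_eq_zero hyx hy hqp hp h.2.2⟩⟩

end QuantumCompleteIntersection

open QuantumCompleteIntersection

theorem derivation_iff_coeff_conditions_quantum_complete_intersection_general
    (k : Type*) [Field k] (p e : ℕ) (q : k)
    (hp : p.Prime) (hchar : CharP k p)
    (hq : orderOf q = e) (he : 2 ≤ e) (hediv : e ∣ p - 1)
    (A : Type*) [Ring A] [Algebra k A] (x y : A)
    (hx : x ^ p = 0) (hy : y ^ p = 0) (hyx : y * x = q • (x * y))
    (b : Module.Basis (Fin p × Fin p) k A)
    (hb : ∀ ij : Fin p × Fin p, b ij = x ^ (ij.1 : ℕ) * y ^ (ij.2 : ℕ))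
    (α β : ℕ → ℕ → k) :
    ((∃ f : Module.End k A, IsDeriv k A f ∧
      f x = ∑ i ∈ Finset.range p, ∑ j ∈ Finset.range p, α i j • (x ^ i * y ^ j) ∧
      f y = ∑ i ∈ Finset.range p, ∑ j ∈ Finset.range p, β i j • (x ^ i * y ^ j)) ↔
      ((∀ i j : ℕ, 1 ≤ i → i ≤ p - 1 → 1 ≤ j → j ≤ p - 1 →
        α i (j - 1) * (1 - q ^ (i - 1)) + β (i - 1) j * (1 - q ^ (j - 1)) = 0) ∧
      (∀ j : ℕ, 1 ≤ j → j ≤ p - 1 → α 0 (j - 1) = 0) ∧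
      (∀ i : ℕ, 1 ≤ i → i ≤ p - 1 → β (i - 1) 0 = 0))) ∧
    ∀ f : Module.End k A, IsDeriv k A f →
      ∀ a ∈ Ideal.jacobson (⊥ : Ideal A), f a ∈ Ideal.jacobson (⊥ : Ideal A) := by
  have hqe : q ^ e = 1 := hq ▸ pow_orderOf_eq_one q
  have hq₀ : q ≠ 0 := by
    rintro rfl
    exact zero_ne_one ((zero_pow (by omega)).symm.trans hqe)
  have hq₁ : q ≠ 1 := by
    rintro rfl
    rw [orderOf_one] at hq
    omega
  have hqp : q ^ (p - 1) = 1 := orderOf_dvd_iff_pow_eq_one.mp (hq ▸ hediv)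
  have hp₀ : (p : k) = 0 := @CharP.cast_eq_zero k _ p hchar
  have key := exists_isDeriv_iff_coeff_conditions b hb hyx hx hy hq₀ hq₁ hqp hp₀
  refine ⟨key α β, fun f hf a _ => ?_⟩
  obtain ⟨χ, hχx, hχy⟩ := exists_augmentation b hb hyx hx hy hp.ne_zero
  obtain ⟨α', hα'⟩ := exists_eq_sum_smul_monomial b hb (f x)
  obtain ⟨β', hβ'⟩ := exists_eq_sum_smul_monomial b hb (f y)
  obtain ⟨-, h₂, h₃⟩ := (key α' β').mp ⟨f, hf, hα', hβ'⟩
  have hp₁ : 1 ≤ p - 1 := Nat.le_sub_one_of_lt hp.one_lt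
  refine ker_le_jacobson_bot b hb hyx hx hy hχx hχy <|
    augmentation_apply_eq_zero_of_isDeriv b hb hχx hχy hf ?_ ?_ a
  · rw [hα', augmentation_sum_smul_monomial hχx hχy hp.pos]
    exact h₂ 1 le_rfl hp₁
  · rw [hβ', augmentation_sum_smul_monomial hχx hχy hp.pos]
    exact h₃ 1 le_rfl hp₁

/-- Lemma (coefficient conditions for derivations): for coefficients `α_{i,j}, β_{i,j}`,
there is a derivation `f` of `A` with `f(x) = Σ α_{i,j} x^i y^j` and
`f(y) = Σ β_{i,j} x^i y^j` if and only if
(1) `α_{i,j−1}(1 − q^{i−1}) + β_{i−1,j}(1 − q^{j−1}) = 0` for `1 ≤ i,j ≤ p−1`,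
(2) `α_{0,j−1} = 0` for `1 ≤ j ≤ p−1`, and
(3) `β_{i−1,0} = 0` for `1 ≤ i ≤ p−1`.
In particular every derivation of `A` maps `J(A)` into `J(A)`. -/
theorem derivation_iff_coeff_conditions_quantum_complete_intersection
    (k : Type*) [Field k] (p e : ℕ) (q : k)
    (hp : p.Prime) (hodd : Odd p) (hchar : CharP k p)
    (hq : orderOf q = e) (he : 2 ≤ e) (hediv : e ∣ p - 1)
    (A : Type*) [Ring A] [Algebra k A] (x y : A)
    (hx : x ^ p = 0) (hy : y ^ p = 0) (hyx : y * x = q • (x * y))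
    (b : Module.Basis (Fin p × Fin p) k A)
    (hb : ∀ ij : Fin p × Fin p, b ij = x ^ (ij.1 : ℕ) * y ^ (ij.2 : ℕ))
    (α β : ℕ → ℕ → k) :
    ((∃ f : Module.End k A, IsDeriv k A f ∧
      f x = ∑ i ∈ Finset.range p, ∑ j ∈ Finset.range p, α i j • (x ^ i * y ^ j) ∧
      f y = ∑ i ∈ Finset.range p, ∑ j ∈ Finset.range p, β i j • (x ^ i * y ^ j)) ↔
      ((∀ i j : ℕ, 1 ≤ i → i ≤ p - 1 → 1 ≤ j → j ≤ p - 1 →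
        α i (j - 1) * (1 - q ^ (i - 1)) + β (i - 1) j * (1 - q ^ (j - 1)) = 0) ∧
      (∀ j : ℕ, 1 ≤ j → j ≤ p - 1 → α 0 (j - 1) = 0) ∧
      (∀ i : ℕ, 1 ≤ i → i ≤ p - 1 → β (i - 1) 0 = 0))) ∧
    ∀ f : Module.End k A, IsDeriv k A f →
      ∀ a ∈ Ideal.jacobson (⊥ : Ideal A), f a ∈ Ideal.jacobson (⊥ : Ideal A) :=
  derivation_iff_coeff_conditions_quantum_complete_intersection_general k p e q hp hchar hq he hediv
    A x y hx hy hyx b hb α β
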